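/- arXiv:1909.02854 — 2 statements merged into one kernel-verified Lean document; each statement's English description precedes it below -/
import Mathlib

section
/- Let Ω be a countably infinite set, r : Ω* → [0,1] a measure representation, ρ ∈ Ω*, and E ⊆ Ω* a prefix-free set. Let E[ρ] be the set of σ ∈ E having ρ as a prefix. If every infinite sequence extending ρ has a prefix in E[ρ], then Σ_{σ∈E[ρ]} r(σ) = r(ρ). -/
open scoped ENNReal

/-- A set of finite strings is prefix-free. -/
def prefixFree {Γ : Type*} (E : Set (List Γ)) : Prop :=
  ∀ σ ∈ E, ∀ τ ∈ E, σ <+: τ → σ = τ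

/-- The prefix of length `n` of an infinite sequence. -/
def pre {Γ : Type*} (α : ℕ → Γ) (n : ℕ) : List Γ := List.ofFn fun i : Fin n => α i

/-- The open set generated by a set of strings: sequences having some prefix in `S`. -/
def cyl {Γ : Type*} (S : Set (List Γ)) : Set (ℕ → Γ) := {α | ∃ n, pre α n ∈ S}

/-- `r` is a measure representation over `Ω`: values in `[0,1]` and
`r σ = ∑_{a ∈ Ω} r (σ a)` for every string `σ`. -/
def MeasRep {Ω : Type*} (r : List Ω → ℝ) : Prop :=
  (∀ σ, 0 ≤ r σ ∧ r σ ≤ 1) ∧ ∀ σ : List Ω, HasSum (fun a : Ω => r (σ ++ [a])) (r σ)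

/-!
Write `S(τ)` for the sum of `r` over the strings of `E` extending `τ`. Because `E` is
prefix-free, `S(τ) = r(τ)` when `τ ∈ E`, and otherwise `S(τ) = ∑ₐ S(τa)`, mirroring
`r(τ) = ∑ₐ r(τa)`. Induction on the depth bounds the sum over the part of `E` of bounded length
by `r`, whence `S ≤ r`. Conversely, if `S(ρ) < r(ρ)` then some child `ρa` again satisfies
`S(ρa) < r(ρa)`, and following such children forever yields an infinite sequence extending `ρ`
none of whose prefixes lies in `E`, contradicting the hypothesis.
-/

section Strings

variable {Γ : Type*}

theorem prefixFree.mono {T T' : Set (List Γ)} (hT : prefixFree T) (h : T' ⊆ T) :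
    prefixFree T' :=
  fun σ hσ τ hτ => hT σ (h hσ) τ (h hτ)

theorem List.IsPrefix.exists_snoc_prefix {τ σ : List Γ} (h : τ <+: σ) (hne : τ ≠ σ) :
    ∃ a, τ ++ [a] <+: σ := by
  obtain ⟨_ | ⟨a, u⟩, rfl⟩ := h
  · simp at hne
  · exact ⟨a, u, by simp⟩

theorem List.eq_of_snoc_prefix_of_snoc_prefix {τ σ : List Γ} {a b : Γ} (ha : τ ++ [a] <+: σ)
    (hb : τ ++ [b] <+: σ) : a = b := by
  have := (List.prefix_of_prefix_length_le ha hb (by simp)).eq_of_length_le (by simp)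
  simpa using this

theorem pre_length (α : ℕ → Γ) (n : ℕ) : (pre α n).length = n := by simp [pre]

theorem getElem_pre (α : ℕ → Γ) {n i : ℕ} (hi : i < (pre α n).length) : (pre α n)[i] = α i := by
  simp [pre]

theorem exists_pre_eq_of_prefix_chain (t : ℕ → List Γ) (ht : ∀ n, t n <+: t (n + 1))
    (hlen : ∀ n, n ≤ (t n).length) : ∃ α : ℕ → Γ, ∀ n, pre α (t n).length = t n := by
  have hmono : ∀ m n, m ≤ n → t m <+: t n := fun m n hmn => by
    induction n, hmn using Nat.le_induction with
    | base => exact List.prefix_rfl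
    | succ n _ ih => exact ih.trans (ht n)
  refine ⟨fun i => (t (i + 1))[i]'(hlen (i + 1)), fun n => List.ext_getElem (pre_length _ _) ?_⟩
  intro i hi hi'
  rw [getElem_pre]
  rcases le_or_gt (i + 1) n with hin | hni
  · exact (hmono _ _ hin).getElem _
  · exact ((hmono _ _ hni.le).getElem hi').symm

theorem exists_seq_of_forall_exists_snoc (P : List Γ → Prop) {ρ : List Γ} (hρ : P ρ)
    (hP : ∀ τ, P τ → ∃ a, P (τ ++ [a])) :
    ∃ α : ℕ → Γ, pre α ρ.length = ρ ∧ ∀ n, P (pre α (ρ.length + n)) := by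
  choose g hg using hP
  let t : ℕ → {τ // P τ} := fun n =>
    Nat.rec ⟨ρ, hρ⟩ (fun _ τ => ⟨τ.1 ++ [g τ.1 τ.2], hg τ.1 τ.2⟩) n
  have hlen : ∀ n, (t n).1.length = ρ.length + n := fun n => by
    induction n with
    | zero => rfl
    | succ n ih => simp only [t, List.length_append, List.length_singleton] at ih ⊢; omega
  obtain ⟨α, hα⟩ := exists_pre_eq_of_prefix_chain (fun n => (t n).1)
    (fun n => List.prefix_append _ _) (fun n => by simp only [hlen]; omega)
  refine ⟨α, hα 0, fun n => ?_⟩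
  rw [← hlen, hα]
  exact (t n).2

def extensions (T : Set (List Γ)) (τ : List Γ) : Set (List Γ) := {σ ∈ T | τ <+: σ}

@[simp]
theorem mem_extensions {T : Set (List Γ)} {τ σ : List Γ} :
    σ ∈ extensions T τ ↔ σ ∈ T ∧ τ <+: σ :=
  Iff.rfl

noncomputable def extSum (f : List Γ → ℝ≥0∞) (T : Set (List Γ)) (τ : List Γ) : ℝ≥0∞ :=
  ∑' σ, (extensions T τ).indicator f σ

variable {f : List Γ → ℝ≥0∞} {T : Set (List Γ)} {τ : List Γ}

theorem le_extSum_of_mem (hτ : τ ∈ T) : f τ ≤ extSum f T τ := by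
  have := ENNReal.le_tsum (f := (extensions T τ).indicator f) τ
  rwa [Set.indicator_of_mem (mem_extensions.2 ⟨hτ, List.prefix_rfl⟩)] at this

theorem extSum_of_mem (hT : prefixFree T) (hτ : τ ∈ T) : extSum f T τ = f τ := by
  rw [extSum, tsum_eq_single τ (fun σ hσ => Set.indicator_of_notMem
    (fun h => hσ (hT τ hτ σ h.1 h.2).symm) f)]
  exact Set.indicator_of_mem (mem_extensions.2 ⟨hτ, List.prefix_rfl⟩) f

theorem indicator_extensions_eq_tsum (hτ : τ ∉ T) (σ : List Γ) :
    (extensions T τ).indicator f σ = ∑' a, (extensions T (τ ++ [a])).indicator f σ := by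
  by_cases hσ : σ ∈ extensions T τ
  · obtain ⟨a, ha⟩ := hσ.2.exists_snoc_prefix (by rintro rfl; exact hτ hσ.1)
    rw [Set.indicator_of_mem hσ, tsum_eq_single a,
      Set.indicator_of_mem (mem_extensions.2 ⟨hσ.1, ha⟩)]
    intro b hb
    exact Set.indicator_of_notMem
      (fun h => hb (List.eq_of_snoc_prefix_of_snoc_prefix h.2 ha)) f
  · rw [Set.indicator_of_notMem hσ]
    refine (ENNReal.tsum_eq_zero.2 fun a => Set.indicator_of_notMem ?_ f).symm
    exact fun h => hσ ⟨h.1, (List.prefix_append τ [a]).trans h.2⟩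

theorem extSum_of_notMem (hτ : τ ∉ T) : extSum f T τ = ∑' a, extSum f T (τ ++ [a]) := by
  simp only [extSum]
  rw [tsum_congr (indicator_extensions_eq_tsum hτ), ENNReal.tsum_comm]

variable (hf : ∀ τ, f τ = ∑' a, f (τ ++ [a]))
include hf

theorem extSum_le_of_length_le (hT : prefixFree T) {N : ℕ} (hN : ∀ σ ∈ T, σ.length ≤ N) :
    ∀ k τ, N < τ.length + k → extSum f T τ ≤ f τ := by
  intro k
  induction k with
  | zero =>
    intro τ hτ
    refine (ENNReal.tsum_eq_zero.2 fun σ => ?_).trans_le zero_le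
    exact Set.indicator_of_notMem (fun h => by have := hN σ h.1; have := h.2.length_le; omega) f
  | succ k ih =>
    intro τ hτ
    by_cases hτT : τ ∈ T
    · exact (extSum_of_mem hT hτT).le
    · rw [extSum_of_notMem hτT, hf τ]
      refine ENNReal.tsum_le_tsum fun a => ih _ ?_
      rw [List.length_append, List.length_singleton]
      omega

theorem extSum_le (hT : prefixFree T) (τ : List Γ) : extSum f T τ ≤ f τ := by
  rw [extSum, ENNReal.tsum_eq_iSup_sum]
  refine iSup_le fun F => ?_
  set N := F.sup List.length
  let T' := {σ ∈ T | σ.length ≤ N}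
  calc ∑ σ ∈ F, (extensions T τ).indicator f σ
      = ∑ σ ∈ F, (extensions T' τ).indicator f σ := by
        refine Finset.sum_congr rfl fun σ hσ => ?_
        have : σ.length ≤ N := Finset.le_sup (f := List.length) hσ
        have hmem : σ ∈ extensions T τ ↔ σ ∈ extensions T' τ := by simp [T', this]
        classical
        simp only [Set.indicator_apply, hmem]
    _ ≤ extSum f T' τ := ENNReal.sum_le_tsum F
    _ ≤ f τ := extSum_le_of_length_le hf (hT.mono fun σ h => h.1) (fun σ h => h.2) (N + 1) τ
        (by omega)

theorem exists_snoc_extSum_lt (hτ : extSum f T τ < f τ) :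
    ∃ a, extSum f T (τ ++ [a]) < f (τ ++ [a]) := by
  have hτT : τ ∉ T := fun hmem => (le_extSum_of_mem hmem).not_gt hτ
  by_contra! hge
  rw [extSum_of_notMem hτT, hf τ] at hτ
  exact (ENNReal.tsum_le_tsum hge).not_gt hτ

theorem le_extSum_of_cyl_subset {ρ : List Γ} (h : cyl {ρ} ⊆ cyl (extensions T ρ)) :
    f ρ ≤ extSum f T ρ := by
  by_contra! hlt
  obtain ⟨α, hαρ, hα⟩ := exists_seq_of_forall_exists_snoc (fun τ => extSum f T τ < f τ) hlt
    fun τ => exists_snoc_extSum_lt hf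
  obtain ⟨n, hnT, hρn⟩ := h ⟨ρ.length, hαρ⟩
  obtain ⟨k, rfl⟩ := Nat.exists_eq_add_of_le (pre_length α n ▸ hρn.length_le)
  exact (le_extSum_of_mem hnT).not_gt (hα k)

end Strings

theorem hasSum_of_tsum_ofReal_eq {ι : Type*} {g : ι → ℝ} {a : ℝ} (hg : ∀ i, 0 ≤ g i)
    (ha : 0 ≤ a) (h : ∑' i, ENNReal.ofReal (g i) = ENNReal.ofReal a) : HasSum g a := by
  have : HasSum (fun i => (g i).toNNReal) a.toNNReal :=
    ENNReal.hasSum_coe.1 (ENNReal.summable.hasSum_iff.2 h)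
  simpa [Real.coe_toNNReal _ (hg _), Real.coe_toNNReal _ ha] using NNReal.hasSum_coe.2 this

theorem stmt1_general {Ω : Type*} (r : List Ω → ℝ)
    (hr : MeasRep r) (ρ : List Ω) (E : Set (List Ω)) (hE : prefixFree E)
    (h : cyl {ρ} ⊆ cyl {σ ∈ E | ρ <+: σ}) :
    HasSum (fun σ : {σ ∈ E | ρ <+: σ} => r (σ : List Ω)) (r ρ) := by
  set f : List Ω → ℝ≥0∞ := fun σ => ENNReal.ofReal (r σ)
  have hf : ∀ τ, f τ = ∑' a, f (τ ++ [a]) := fun τ => by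
    rw [← ENNReal.ofReal_tsum_of_nonneg (fun a => (hr.1 _).1) (hr.2 τ).summable,
      (hr.2 τ).tsum_eq]
  have hS : extSum f E ρ = f ρ := le_antisymm (extSum_le hf hE ρ) (le_extSum_of_cyl_subset hf h)
  rw [extSum, ← tsum_subtype] at hS
  exact hasSum_of_tsum_ofReal_eq (fun σ => (hr.1 σ).1) (hr.1 ρ).1 hS

/-- If `E` is prefix-free and every infinite sequence extending `ρ`
has a prefix in `E[ρ] = {σ ∈ E | ρ is a prefix of σ}`, then `∑_{σ ∈ E[ρ]} r σ = r ρ`. -/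
theorem stmt1 {Ω : Type*} [Countable Ω] [Infinite Ω] (r : List Ω → ℝ)
    (hr : MeasRep r) (ρ : List Ω) (E : Set (List Ω)) (hE : prefixFree E)
    (h : cyl {ρ} ⊆ cyl {σ ∈ E | ρ <+: σ}) :
    HasSum (fun σ : {σ ∈ E | ρ <+: σ} => r (σ : List Ω)) (r ρ) :=
  stmt1_general r hr ρ E hE h
end

section
/- Let Ω be an r.e. infinite set, P a discrete probability space on Ω, and A₁,…,A_L pairwise disjoint r.e. subsets of Ω covering Ω. Let Θ = {a₁,…,a_L} be a finite alphabet of distinct symbols, and define Q ∈ 𝕡(Θ) by Q(aᵢ) := P(Aᵢ). If α is Martin-Löf P-random and β is obtained from α by replacing each occurrence of an element of Aᵢ with aᵢ, then β is Martin-Löf Q-random. -/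
/-!
A Martin-Löf `Q`-test `C` pulls back along the contraction to the `P`-test of all `(n, σ)` such
that `σ` lies letterwise in `A_τ` for some `(n, τ) ∈ C`. It is r.e. because `C` and the `Aᵢ` are;
its sections are prefix-free because the `Aᵢ` are disjoint, so each `σ` determines `τ`; and since
`Q(aᵢ) = P(Aᵢ)`, the strings lying letterwise in `A_τ` have total `λ_P`-weight `λ_Q([τ])`, so the
sections keep measure `< 2⁻ⁿ`. If `β` failed `C`, then `α`, whose prefixes lie letterwise in the
`A` of the corresponding prefixes of `β`, would fail the pulled-back test.
-/

open scoped ENNReal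

/-- The (generalized) Bernoulli probability of a finite string:
`P(σ₁)···P(σₙ)`. -/
def strP {Γ : Type*} (P : Γ → ℝ) (σ : List Γ) : ℝ := (σ.map P).prod

/-- The `λ_P`-measure of the open set generated by a prefix-free set `S`. -/
noncomputable def mOpen {Γ : Type*} (P : Γ → ℝ) (S : Set (List Γ)) : ℝ≥0∞ :=
  ∑' σ : S, ENNReal.ofReal (strP P (σ : List Γ))

/-- All symbols of the string belong to the alphabet `O`. -/
def strIn {Γ : Type*} (O : Set Γ) (σ : List Γ) : Prop := ∀ a ∈ σ, a ∈ O

/-- All symbols of the sequence belong to the alphabet `O`. -/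
def seqIn {Γ : Type*} (O : Set Γ) (α : ℕ → Γ) : Prop := ∀ n, α n ∈ O

/-- `P` is a discrete probability space on the alphabet `O`. -/
def isProb {Γ : Type*} (O : Set Γ) (P : Γ → ℝ) : Prop :=
  (∀ a ∈ O, 0 ≤ P a) ∧ HasSum (fun a : O => P (a : Γ)) 1

/-- The combinatorial conditions on a Martin-Löf `P`-test: sections consist of strings
over the alphabet, are prefix-free, and have `λ_P`-measure `< 2⁻ⁿ`. -/
def isTestSet {Γ : Type*} (O : Set Γ) (P : Γ → ℝ) (C : Set (ℕ × List Γ)) : Prop :=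
  (∀ x ∈ C, strIn O x.2) ∧
  ∀ n : ℕ, 1 ≤ n → prefixFree {σ | (n, σ) ∈ C} ∧
    mOpen P {σ | (n, σ) ∈ C} < (2 : ℝ≥0∞)⁻¹ ^ n

/-- A Martin-Löf `P`-test: an r.e. subset of `ℕ⁺ × Ω*` satisfying the test conditions. -/
def MLTest {Γ : Type*} [Primcodable Γ] (O : Set Γ) (P : Γ → ℝ)
    (C : Set (ℕ × List Γ)) : Prop :=
  REPred (· ∈ C) ∧ isTestSet O P C

/-- `α` is Martin-Löf `P`-random: it passes every Martin-Löf `P`-test. -/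
def MLRandom {Γ : Type*} [Primcodable Γ] (O : Set Γ) (P : Γ → ℝ) (α : ℕ → Γ) : Prop :=
  ∀ C : Set (ℕ × List Γ), MLTest O P C → ∃ n, 1 ≤ n ∧ α ∉ cyl {σ | (n, σ) ∈ C}

namespace REPred

variable {α β : Type*} [Primcodable α] [Primcodable β]

-- Monotonicity in the stage `n` lets finitely many searches share one common bound.
open Encodable Nat.Partrec Code in
theorem exists_primrec_monotone {p : α → Prop} (h : REPred p) :
    ∃ g : α → ℕ → Bool, Primrec₂ g ∧ (∀ a, Monotone (g a)) ∧ ∀ a, p a ↔ ∃ n, g a n := by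
  obtain ⟨c, hc⟩ := exists_code.1 h
  refine ⟨fun a n => (evaln n c (encode a)).isSome, ?_, fun a m n hmn => ?_, fun a => ?_⟩
  · exact Primrec.option_isSome.comp (primrec_evaln.comp
      ((Primrec.snd.pair (Primrec.const c)).pair (Primrec.encode.comp Primrec.fst)))
  · simp only [Bool.le_iff_imp, Option.isSome_iff_exists]
    exact fun ⟨x, hx⟩ => ⟨x, evaln_mono hmn hx⟩
  · have heval : eval c (encode a) = (Part.assert (p a) fun _ => Part.some ()).map encode := by
      rw [hc]; simp [encodek]
    have hdom : p a ↔ (eval c (encode a)).Dom := by simp [heval, Part.assert]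
    simp only [hdom, Part.dom_iff_mem, evaln_complete, Option.isSome_iff_exists, Option.mem_def]
    exact exists_comm

theorem of_exists_computable {p : α → Prop} {g : α → ℕ → Bool} (hg : Computable₂ g)
    (h : ∀ a, p a ↔ ∃ n, g a n) : REPred p := by
  have hsearch : Computable₂ fun a n => bif g a n then some () else none :=
    hg.cond (Computable.const _) (Computable.const _)
  refine (Partrec.rfindOpt hsearch).dom_re.of_eq fun a => ?_
  simp only [Nat.rfindOpt_dom, h, Option.mem_def]
  exact exists_congr fun n => by cases g a n <;> simp

protected theorem comp {p : β → Prop} {f : α → β} (hp : REPred p) (hf : Computable f) :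
    REPred fun a => p (f a) :=
  Partrec.comp hp hf

protected theorem and {p q : α → Prop} (hp : REPred p) (hq : REPred q) :
    REPred fun a => p a ∧ q a := by
  obtain ⟨f, hf, hfm, hfp⟩ := hp.exists_primrec_monotone
  obtain ⟨g, hg, hgm, hgq⟩ := hq.exists_primrec_monotone
  refine of_exists_computable (g := fun a n => f a n && g a n)
    (Primrec.and.comp₂ hf hg).to_comp fun a => ?_
  simp only [hfp, hgq, Bool.and_eq_true]
  constructor
  · rintro ⟨⟨m, hm⟩, ⟨n, hn⟩⟩
    exact ⟨max m n, hfm a (le_max_left m n) hm, hgm a (le_max_right m n) hn⟩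
  · rintro ⟨n, hm, hn⟩
    exact ⟨⟨n, hm⟩, ⟨n, hn⟩⟩

protected theorem or {p q : α → Prop} (hp : REPred p) (hq : REPred q) :
    REPred fun a => p a ∨ q a := by
  obtain ⟨f, hf, -, hfp⟩ := hp.exists_primrec_monotone
  obtain ⟨g, hg, -, hgq⟩ := hq.exists_primrec_monotone
  refine of_exists_computable (g := fun a n => f a n || g a n)
    (Primrec.or.comp₂ hf hg).to_comp fun a => ?_
  simp only [hfp, hgq, Bool.or_eq_true, exists_or]

open Encodable in
theorem exists_snd {r : α × β → Prop} (h : REPred r) : REPred fun a => ∃ b, r (a, b) := by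
  obtain ⟨g, hg, -, hgr⟩ := h.exists_primrec_monotone
  have hsearch : Primrec₂ fun a (k : ℕ) =>
      (decode (α := β) k.unpair.1).elim false fun b => g (a, b) k.unpair.2 :=
    Primrec₂.of_eq (Primrec.to₂ <| Primrec.option_casesOn
      (Primrec.decode.comp (Primrec.fst.comp (Primrec.unpair.comp Primrec.snd)))
      (Primrec.const false)
      (hg.comp₂ ((Primrec.fst.comp Primrec.fst).pair Primrec.snd).to₂
        (Primrec.snd.comp (Primrec.unpair.comp (Primrec.snd.comp Primrec.fst))).to₂))
      fun a k => by cases decode (α := β) k.unpair.1 <;> rfl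
  refine of_exists_computable hsearch.to_comp fun a => ?_
  constructor
  · rintro ⟨b, hb⟩
    obtain ⟨n, hn⟩ := (hgr (a, b)).1 hb
    exact ⟨Nat.pair (encode b) n, by simpa using hn⟩
  · rintro ⟨k, hk⟩
    cases hb : decode (α := β) k.unpair.1 with
    | none => simp [hb] at hk
    | some b => exact ⟨b, (hgr (a, b)).2 ⟨_, by simpa [hb] using hk⟩⟩

theorem forall_mem_list {r : α → Prop} (h : REPred r) :
    REPred fun l : List α => ∀ x ∈ l, r x := by
  obtain ⟨g, hg, hgm, hgr⟩ := h.exists_primrec_monotone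
  have hsearch : Primrec₂ fun (l : List α) n => decide (l.findIdx (fun x => !g x n) = l.length) :=
    (Primrec.eq.comp (Primrec.list_findIdx Primrec.fst
      (Primrec.not.comp (hg.comp Primrec.snd (Primrec.snd.comp Primrec.fst))).to₂)
      (Primrec.list_length.comp Primrec.fst)).decide
  refine of_exists_computable hsearch.to_comp fun l => ?_
  simp only [decide_eq_true_eq, List.findIdx_eq_length, Bool.not_eq_false', hgr]
  constructor
  · induction l with
    | nil => exact fun _ => ⟨0, by simp⟩
    | cons a l ih =>
      intro hl
      obtain ⟨m, hm⟩ := hl a List.mem_cons_self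
      obtain ⟨n, hn⟩ := ih fun x hx => hl x (List.mem_cons_of_mem _ hx)
      refine ⟨max m n, List.forall_mem_cons.2 ⟨hgm a (le_max_left m n) hm, fun x hx => ?_⟩⟩
      exact hgm x (le_max_right m n) (hn x hx)
  · exact fun ⟨n, hn⟩ x hx => ⟨n, hn x hx⟩

theorem exists_fintype {ι : Type*} [Fintype ι] {r : ι → α → Prop} (h : ∀ i, REPred (r i)) :
    REPred fun a => ∃ i, r i a := by
  suffices ∀ s : Finset ι, REPred fun a => ∃ i ∈ s, r i a from
    (this Finset.univ).of_eq fun a => by simp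
  intro s
  induction s using Finset.cons_induction with
  | empty => exact (Partrec.none (α := α) (σ := Unit)).dom_re.of_eq fun _ => by simp
  | cons i s hi ih => exact ((h i).or ih).of_eq fun a => by simp

theorem uncurry_of_fintype {ι : Type*} [Fintype ι] [Primcodable ι] {r : ι → α → Prop}
    (h : ∀ i, REPred (r i)) : REPred fun x : α × ι => r x.2 x.1 :=
  (exists_fintype fun i => (Primrec.eq.comp Primrec.snd (Primrec.const i)).computablePred.to_re.and
    ((h i).comp Computable.fst)).of_eq fun x => by simp

end REPred

theorem List.forall₂_iff_exists_map {Γ Θ : Type*} {R : Γ → Θ → Prop} {σ : List Γ} {τ : List Θ} :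
    List.Forall₂ R σ τ ↔
      ∃ π : List (Γ × Θ), π.map Prod.fst = σ ∧ π.map Prod.snd = τ ∧ ∀ p ∈ π, R p.1 p.2 := by
  constructor
  · intro h
    refine ⟨σ.zip τ, List.map_fst_zip h.length_eq.le, List.map_snd_zip h.length_eq.ge,
      fun p hp => List.forall₂_zip h hp⟩
  · rintro ⟨π, rfl, rfl, h⟩
    simpa [List.forall₂_same] using h

theorem strIn_of_forall₂ {Γ Θ : Type*} {R : Γ → Θ → Prop} {O : Set Γ}
    (hRO : ∀ a b, R a b → a ∈ O) {σ : List Γ} {τ : List Θ} (h : List.Forall₂ R σ τ) :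
    strIn O σ := by
  induction h with
  | nil => exact List.forall_mem_nil _
  | cons hab _ ih => exact List.forall_mem_cons.2 ⟨hRO _ _ hab, ih⟩

section Pullback

variable {Γ Θ : Type*} (R : Γ → Θ → Prop)

def testPullback (C : Set (ℕ × List Θ)) : Set (ℕ × List Γ) :=
  {x | ∃ τ, (x.1, τ) ∈ C ∧ List.Forall₂ R x.2 τ}

def forall₂ConsEquiv (b : Θ) (τ : List Θ) :
    {σ // List.Forall₂ R σ (b :: τ)} ≃ {a // R a b} × {σ // List.Forall₂ R σ τ} where
  toFun
    | ⟨a :: σ, h⟩ => (⟨a, (List.forall₂_cons.1 h).1⟩, ⟨σ, (List.forall₂_cons.1 h).2⟩)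
  invFun x := ⟨x.1.1 :: x.2.1, .cons x.1.2 x.2.2⟩
  left_inv
    | ⟨_ :: _, _⟩ => rfl
  right_inv _ := rfl

theorem tsum_prod_map_of_forall₂ (w : Γ → ℝ≥0∞) (τ : List Θ) :
    ∑' σ : {σ // List.Forall₂ R σ τ}, ((σ : List Γ).map w).prod =
      (τ.map fun b => ∑' a : {a // R a b}, w a).prod := by
  induction τ with
  | nil =>
    rw [tsum_eq_single ⟨[], .nil⟩ fun σ hσ =>
      (hσ (Subtype.ext (List.forall₂_nil_right_iff.1 σ.2))).elim]
    simp
  | cons b τ ih =>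
    rw [← (forall₂ConsEquiv R b τ).symm.tsum_eq]
    simp only [forall₂ConsEquiv, Equiv.coe_fn_symm_mk, List.map_cons, List.prod_cons]
    rw [ENNReal.tsum_prod', ← ih, ← ENNReal.tsum_mul_right]
    simp only [ENNReal.tsum_mul_left]

theorem ofReal_strP {P : Γ → ℝ} {σ : List Γ} (hP : ∀ a ∈ σ, 0 ≤ P a) :
    ENNReal.ofReal (strP P σ) = (σ.map fun a => ENNReal.ofReal (P a)).prod := by
  induction σ with
  | nil => simp [strP]
  | cons a σ ih =>
    rw [List.forall_mem_cons] at hP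
    simp only [strP, List.map_cons, List.prod_cons] at ih ⊢
    rw [ENNReal.ofReal_mul hP.1, ih hP.2]

variable {R}

theorem tsum_ofReal_strP_of_forall₂ {P : Γ → ℝ} {Q : Θ → ℝ} (hP : ∀ a b, R a b → 0 ≤ P a)
    (hQ : ∀ b, HasSum (fun a : {a // R a b} => P a) (Q b)) (τ : List Θ) :
    ∑' σ : {σ // List.Forall₂ R σ τ}, ENNReal.ofReal (strP P σ) = ENNReal.ofReal (strP Q τ) := by
  have hsum : ∀ b, ∑' a : {a // R a b}, ENNReal.ofReal (P a) = ENNReal.ofReal (Q b) := fun b => by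
    rw [← ENNReal.ofReal_tsum_of_nonneg (fun a => hP _ _ a.2) (hQ b).summable, (hQ b).tsum_eq]
  rw [ofReal_strP fun b _ => (hQ b).nonneg fun a => hP _ _ a.2,
    ← List.map_congr_left fun b _ => hsum b,
    ← tsum_prod_map_of_forall₂ R fun a => ENNReal.ofReal (P a)]
  exact tsum_congr fun σ => ofReal_strP (strIn_of_forall₂ hP σ.2)

theorem mOpen_pullback_le {P : Γ → ℝ} {Q : Θ → ℝ} (hP : ∀ a b, R a b → 0 ≤ P a)
    (hQ : ∀ b, HasSum (fun a : {a // R a b} => P a) (Q b)) (T : Set (List Θ)) :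
    mOpen P {σ | ∃ τ ∈ T, List.Forall₂ R σ τ} ≤ mOpen Q T := by
  have hS : {σ | ∃ τ ∈ T, List.Forall₂ R σ τ} = ⋃ τ : T, {σ | List.Forall₂ R σ τ} := by
    ext; simp
  rw [mOpen, mOpen, hS]
  exact (ENNReal.tsum_iUnion_le_tsum (fun σ => ENNReal.ofReal (strP P σ)) _).trans_eq
    (tsum_congr fun τ => tsum_ofReal_strP_of_forall₂ hP hQ τ)

theorem prefixFree_pullback (hR : Relator.RightUnique R) {T : Set (List Θ)} (hT : prefixFree T) :
    prefixFree {σ | ∃ τ ∈ T, List.Forall₂ R σ τ} := by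
  rintro σ ⟨τ, hτ, h⟩ σ' ⟨τ', hτ', h'⟩ hσ
  have hprefix : τ <+: τ' := by
    rw [List.prefix_iff_eq_take] at hσ ⊢
    have htake := List.forall₂_take σ.length h'
    rw [← hσ, h.length_eq] at htake
    exact hR.forall₂ h htake
  obtain rfl := hT τ hτ τ' hτ' hprefix
  exact hσ.eq_of_length (h.length_eq.trans h'.length_eq.symm)

theorem isTestSet_testPullback {O : Set Γ} {O' : Set Θ} {P : Γ → ℝ} {Q : Θ → ℝ}
    (hRO : ∀ a b, R a b → a ∈ O) (hR : Relator.RightUnique R) (hP : ∀ a b, R a b → 0 ≤ P a)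
    (hQ : ∀ b, HasSum (fun a : {a // R a b} => P a) (Q b)) {C : Set (ℕ × List Θ)}
    (hC : isTestSet O' Q C) : isTestSet O P (testPullback R C) :=
  ⟨fun _ ⟨_, _, h⟩ => strIn_of_forall₂ hRO h, fun n hn =>
    ⟨prefixFree_pullback hR (hC.2 n hn).1, (mOpen_pullback_le hP hQ _).trans_lt (hC.2 n hn).2⟩⟩

theorem rePred_testPullback [Primcodable Γ] [Primcodable Θ]
    (hR : REPred fun x : Γ × Θ => R x.1 x.2) {C : Set (ℕ × List Θ)} (hC : REPred (· ∈ C)) :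
    REPred (· ∈ testPullback R C) := by
  have hfst : Primrec fun y : (ℕ × List Γ) × List (Γ × Θ) => y.2.map Prod.fst :=
    Primrec.list_map Primrec.snd (Primrec.fst.comp Primrec.snd).to₂
  have hsnd : Computable fun y : (ℕ × List Γ) × List (Γ × Θ) => y.2.map Prod.snd :=
    (Primrec.list_map Primrec.snd (Primrec.snd.comp Primrec.snd).to₂).to_comp
  have hzip : REPred fun y : (ℕ × List Γ) × List (Γ × Θ) =>
      (y.1.1, y.2.map Prod.snd) ∈ C ∧ y.2.map Prod.fst = y.1.2 ∧ ∀ p ∈ y.2, R p.1 p.2 :=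
    (hC.comp ((Computable.fst.comp Computable.fst).pair hsnd)).and
      ((Primrec.eq.comp hfst (Primrec.snd.comp Primrec.fst)).computablePred.to_re.and
        ((REPred.forall_mem_list hR).comp Computable.snd))
  refine (REPred.exists_snd hzip).of_eq fun x => ?_
  simp only [testPullback, Set.mem_ofPred_eq, List.forall₂_iff_exists_map]
  constructor
  · rintro ⟨π, hC, hfst, hR⟩
    exact ⟨_, hC, π, hfst, rfl, hR⟩
  · rintro ⟨_, hC, π, hfst, rfl, hR⟩
    exact ⟨π, hC, hfst, hR⟩

end Pullback

theorem forall₂_pre {Γ Θ : Type*} {R : Γ → Θ → Prop} {α : ℕ → Γ} {β : ℕ → Θ}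
    (h : ∀ n, R (α n) (β n)) (k : ℕ) : List.Forall₂ R (pre α k) (pre β k) :=
  List.forall₂_iff_get.2 ⟨by simp [pre], fun i _ _ => by simpa [pre] using h i⟩

theorem stmt11_general (Ω : Set ℕ)
    (P : ℕ → ℝ) (hP : isProb Ω P)
    (L : ℕ) (A : Fin L → Set ℕ) (hAre : ∀ i, REPred (· ∈ A i))
    (hcover : (⋃ i, A i) = Ω) (hdisj : ∀ i j, i ≠ j → A i ∩ A j = ∅)
    (Q : Fin L → ℝ) (hQ : ∀ i, HasSum (fun a : A i => P (a : ℕ)) (Q i))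
    (α : ℕ → ℕ) (hα : seqIn Ω α) (hrand : MLRandom Ω P α)
    (β : ℕ → Fin L) (hβ : ∀ n, ∀ i, α n ∈ A i → β n = i) :
    MLRandom (Set.univ : Set (Fin L)) Q β := by
  have hsub : ∀ a i, a ∈ A i → a ∈ Ω := fun a i ha => hcover ▸ Set.mem_iUnion_of_mem i ha
  have hunique : Relator.RightUnique fun a i => a ∈ A i := fun _ i j hi hj =>
    by_contra fun hij => (hdisj i j hij).subset ⟨hi, hj⟩
  have hαβ : ∀ n, α n ∈ A (β n) := fun n => by
    obtain ⟨i, hi⟩ := Set.mem_iUnion.1 (hcover ▸ hα n)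
    exact hβ n i hi ▸ hi
  intro C hC
  obtain ⟨n, hn, hαn⟩ := hrand (testPullback (fun a i => a ∈ A i) C)
    ⟨rePred_testPullback (REPred.uncurry_of_fintype hAre) hC.1,
      isTestSet_testPullback hsub hunique (fun a i ha => hP.1 a (hsub a i ha)) hQ hC.2⟩
  exact ⟨n, hn, fun ⟨k, hk⟩ => hαn ⟨k, pre β k, hk, forall₂_pre (R := fun a i => a ∈ A i) hαβ k⟩⟩

/-- Contraction of an ensemble: replacing the elements of each
set `Aᵢ` of an r.e. partition of `Ω` by a single symbol `aᵢ` of a finite alphabet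
maps a Martin-Löf `P`-random sequence to a Martin-Löf `Q`-random sequence, where
`Q(aᵢ) = P(Aᵢ)`. -/
theorem stmt11 (Ω : Set ℕ) (hre : REPred (· ∈ Ω)) (hinf : Ω.Infinite)
    (P : ℕ → ℝ) (hP : isProb Ω P)
    (L : ℕ) (A : Fin L → Set ℕ) (hAre : ∀ i, REPred (· ∈ A i))
    (hcover : (⋃ i, A i) = Ω) (hdisj : ∀ i j, i ≠ j → A i ∩ A j = ∅)
    (Q : Fin L → ℝ) (hQ : ∀ i, HasSum (fun a : A i => P (a : ℕ)) (Q i))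
    (α : ℕ → ℕ) (hα : seqIn Ω α) (hrand : MLRandom Ω P α)
    (β : ℕ → Fin L) (hβ : ∀ n, ∀ i, α n ∈ A i → β n = i) :
    MLRandom (Set.univ : Set (Fin L)) Q β :=
  stmt11_general Ω P hP L A hAre hcover hdisj Q hQ α hα hrand β hβ
end
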